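/- Let n ≥ 1, let φ ∈ L^∞(𝕋^n) be nonzero, and suppose the Toeplitz operator T_φ on H²(𝔻^n) is a partial isometry. Then the range of T_φ (which is a closed subspace of H²(𝔻^n)) is invariant under multiplication by each coordinate function: z_i · ran(T_φ) ⊆ ran(T_φ) for all i = 1, …, n. -/

import Mathlib

noncomputable section

open MeasureTheory Complex Filter Topology ContinuousLinearMap

/-- The `n`-torus `𝕋^n`, with its (normalized, since `T = 1`) Haar measure. -/
abbrev Torus (n : ℕ) : Type := Fin n → UnitAddCircle

/-- The Lebesgue space `L²(𝕋^n)`. -/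
abbrev L2T (n : ℕ) : Type := Lp ℂ 2 (volume : Measure (Torus n))

/-- The character `z ↦ z^k` on the `n`-torus, `k ∈ ℤ^n`. -/
def charFn (n : ℕ) (k : Fin n → ℤ) : Torus n → ℂ := fun z => ∏ i, fourier (k i) (z i)

theorem charFn_continuous (n : ℕ) (k : Fin n → ℤ) : Continuous (charFn n k) :=
  continuous_finset_prod _ fun i _ => (map_continuous (fourier (k i))).comp (continuous_apply i)

theorem charFn_norm (n : ℕ) (k : Fin n → ℤ) (z : Torus n) : ‖charFn n k z‖ = 1 := by
  rw [charFn, norm_prod]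
  exact Finset.prod_eq_one fun i _ => Circle.norm_coe _

theorem charFn_memℒp (n : ℕ) (k : Fin n → ℤ) :
    MemLp (charFn n k) ⊤ (volume : Measure (Torus n)) :=
  memLp_top_of_bound (charFn_continuous n k).aestronglyMeasurable 1
    (Eventually.of_forall fun z => le_of_eq (charFn_norm n k z))

/-- The `k`-th Fourier coefficient `f̂(k) = ∫_{𝕋^n} (conj z^k) f(z) dm(z)`. -/
def mFourierCoeff {n : ℕ} (f : Torus n → ℂ) (k : Fin n → ℤ) : ℂ :=
  ∫ z, (starRingEnd ℂ) (charFn n k z) * f z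

theorem mFourierCoeff_congr {n : ℕ} {f g : Torus n → ℂ}
    (h : f =ᵐ[(volume : Measure (Torus n))] g) (k : Fin n → ℤ) :
    mFourierCoeff f k = mFourierCoeff g k :=
  integral_congr_ae (h.mono fun z hz => by simp only [hz])

theorem integrable_char_mul (n : ℕ) (k : Fin n → ℤ) (f : L2T n) :
    Integrable (fun z => (starRingEnd ℂ) (charFn n k z) * f z)
      (volume : Measure (Torus n)) := by
  have hf : Integrable (⇑f) (volume : Measure (Torus n)) := (Lp.memLp f).integrable one_le_two
  refine hf.bdd_mul (c := 1) ?_ (Eventually.of_forall fun z => ?_)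
  · exact (continuous_star.comp (charFn_continuous n k)).aestronglyMeasurable
  · exact le_of_eq (by rw [starRingEnd_apply, norm_star, charFn_norm])

theorem mFourierCoeff_add {n : ℕ} (k : Fin n → ℤ) (f g : L2T n) :
    mFourierCoeff (⇑(f + g)) k = mFourierCoeff (⇑f) k + mFourierCoeff (⇑g) k := by
  rw [mFourierCoeff_congr (Lp.coeFn_add f g) k]
  unfold mFourierCoeff
  simp only [Pi.add_apply, mul_add]
  exact integral_add (integrable_char_mul n k f) (integrable_char_mul n k g)

theorem mFourierCoeff_smul {n : ℕ} (k : Fin n → ℤ) (c : ℂ) (f : L2T n) :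
    mFourierCoeff (⇑(c • f)) k = c * mFourierCoeff (⇑f) k := by
  rw [mFourierCoeff_congr (Lp.coeFn_smul c f) k]
  unfold mFourierCoeff
  have : (fun z => (starRingEnd ℂ) (charFn n k z) * (c • ⇑f) z) =
      fun z => c • ((starRingEnd ℂ) (charFn n k z) * f z) := by
    funext z; simp only [Pi.smul_apply, smul_eq_mul]; ring
  rw [this, integral_smul, smul_eq_mul]

/-- All Fourier coefficients with some negative index vanish (membership in the "analytic"
part, e.g. `H²(𝕋^n)` resp. `H^∞(𝔻^n)` for `L²` resp. `L^∞` functions). -/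
def IsAnalyticSymbol {n : ℕ} (φ : Torus n → ℂ) : Prop :=
  ∀ k : Fin n → ℤ, (∃ i, k i < 0) → mFourierCoeff φ k = 0

/-- `φ ∈ H^∞(𝔻^n) = L^∞(𝕋^n) ∩ H²(𝕋^n)`. -/
def IsHinfty {n : ℕ} (φ : Torus n → ℂ) : Prop :=
  MemLp φ ⊤ (volume : Measure (Torus n)) ∧ IsAnalyticSymbol φ

/-- `φ` is an inner function in `H^∞(𝔻^n)`: it is in `H^∞` and unimodular a.e. on `𝕋^n`. -/
def IsInnerFn {n : ℕ} (φ : Torus n → ℂ) : Prop :=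
  IsHinfty φ ∧ ∀ᵐ z ∂(volume : Measure (Torus n)), ‖φ z‖ = 1

/-- `φ` depends only on the variables in `A`: `φ̂(k) = 0` whenever `k j ≠ 0` for some `j ∉ A`. -/
def DependsOnlyOn {n : ℕ} (φ : Torus n → ℂ) (A : Set (Fin n)) : Prop :=
  ∀ k : Fin n → ℤ, (∃ j, j ∉ A ∧ k j ≠ 0) → mFourierCoeff φ k = 0

/-- The Hardy space `H²(𝔻^n) ≅ H²(𝕋^n)` as a subspace of `L²(𝕋^n)`. -/
def hardySpace (n : ℕ) : Submodule ℂ (L2T n) where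
  carrier := {f : L2T n | ∀ k : Fin n → ℤ, (∃ i, k i < 0) → mFourierCoeff (⇑f) k = 0}
  add_mem' := by
    intro a b ha hb k hk
    rw [mFourierCoeff_add k a b, ha k hk, hb k hk, add_zero]
  zero_mem' := by
    intro k hk
    rw [mFourierCoeff_congr (Lp.coeFn_zero ℂ 2 (volume : Measure (Torus _))) k]
    simp [mFourierCoeff]
  smul_mem' := by
    intro c a ha k hk
    rw [mFourierCoeff_smul k c a, ha k hk, mul_zero]

/-- The character `z^k` as an element of `L²(𝕋^n)`. -/
def charLp2 (n : ℕ) (k : Fin n → ℤ) : L2T n :=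
  MemLp.toLp (charFn n k) ((charFn_memℒp n k).mono_exponent le_top)

theorem mFourierCoeff_eq_inner (n : ℕ) (k : Fin n → ℤ) (f : L2T n) :
    mFourierCoeff (⇑f) k = @inner ℂ _ _ (charLp2 n k) f := by
  rw [mFourierCoeff, MeasureTheory.L2.inner_def]
  apply integral_congr_ae
  have hcoe : ⇑(charLp2 n k) =ᵐ[(volume : Measure (Torus n))] charFn n k :=
    MemLp.coeFn_toLp _
  filter_upwards [hcoe] with z hz
  rw [RCLike.inner_apply, hz, mul_comm]

theorem hardySpace_isClosed (n : ℕ) :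
    IsClosed ((hardySpace n : Submodule ℂ (L2T n)) : Set (L2T n)) := by
  have h : ((hardySpace n : Submodule ℂ (L2T n)) : Set (L2T n)) =
      ⋂ k ∈ {k : Fin n → ℤ | ∃ i, k i < 0},
        {f : L2T n | @inner ℂ _ _ (charLp2 n k) f = 0} := by
    ext f
    simp only [Set.mem_iInter, Set.mem_setOf_eq, SetLike.mem_coe]
    constructor
    · intro hf k hk
      rw [← mFourierCoeff_eq_inner]; exact hf k hk
    · intro hf k hk
      rw [mFourierCoeff_eq_inner]; exact hf k hk
  rw [h]
  exact isClosed_biInter fun k _ =>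
    isClosed_eq (Continuous.inner continuous_const continuous_id) continuous_const

instance hardySpace_completeSpace (n : ℕ) : CompleteSpace (hardySpace n) :=
  (hardySpace_isClosed n).completeSpace_coe

/-- The Hardy space as a Hilbert space. -/
abbrev HardyH (n : ℕ) := ↥(hardySpace n)

/-- The representative function of an element of the Hardy space. -/
def repFn {n : ℕ} (f : HardyH n) : Torus n → ℂ := ⇑(f : L2T n)

theorem mul_memℒp {n : ℕ} {φ : Torus n → ℂ} (hφ : MemLp φ ⊤ (volume : Measure (Torus n)))
    (f : L2T n) : MemLp (fun z => φ z * f z) 2 (volume : Measure (Torus n)) := by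
  exact (Lp.memLp f).mul' hφ

/-- Multiplication by `φ ∈ L^∞(𝕋^n)` as a map on `L²(𝕋^n)`. -/
def mulL2 {n : ℕ} (φ : Torus n → ℂ) (hφ : MemLp φ ⊤ (volume : Measure (Torus n)))
    (f : L2T n) : L2T n :=
  MemLp.toLp (fun z => φ z * f z) (mul_memℒp hφ f)

/-- `IsToeplitz φ hφ T` : `T` is the Toeplitz operator on `H²(𝔻^n)` with symbol
`φ ∈ L^∞(𝕋^n)`, i.e. `T f = P(φ f)` where `P` is the orthogonal projection onto `H²`. -/
def IsToeplitz {n : ℕ} (φ : Torus n → ℂ) (hφ : MemLp φ ⊤ (volume : Measure (Torus n)))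
    (T : HardyH n →L[ℂ] HardyH n) : Prop :=
  ∀ f : HardyH n, T f = (hardySpace n).orthogonalProjectionOnto (mulL2 φ hφ (f : L2T n))

/-- `IsMulOp φ T` : `T` is the multiplication operator `M_φ` on `H²(𝔻^n)`. -/
def IsMulOp {n : ℕ} (φ : Torus n → ℂ) (T : HardyH n →L[ℂ] HardyH n) : Prop :=
  ∀ f : HardyH n, repFn (T f) =ᵐ[(volume : Measure (Torus n))] fun z => φ z * repFn f z

/-- A bounded operator is a partial isometry if it is isometric on the orthogonal
complement of its kernel. -/
def IsPartialIsometryOp {E F : Type*} [NormedAddCommGroup E] [InnerProductSpace ℂ E]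
    [NormedAddCommGroup F] [NormedSpace ℂ F] (T : E →L[ℂ] F) : Prop :=
  ∀ x ∈ (LinearMap.ker (T : E →ₗ[ℂ] F))ᗮ, ‖T x‖ = ‖x‖

/-- Hyponormality: `T*T - TT* ≥ 0`. -/
def IsHyponormal {H : Type*} [NormedAddCommGroup H] [InnerProductSpace ℂ H] [CompleteSpace H]
    (T : H →L[ℂ] H) : Prop :=
  (ContinuousLinearMap.adjoint T ∘L T - T ∘L ContinuousLinearMap.adjoint T).IsPositive

/-- A shift: an isometry whose adjoint powers tend to `0` strongly. -/
def IsShiftOp {H : Type*} [NormedAddCommGroup H] [InnerProductSpace ℂ H] [CompleteSpace H]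
    (V : H →L[ℂ] H) : Prop :=
  Isometry V ∧ ∀ x : H, Tendsto (fun m : ℕ => ((ContinuousLinearMap.adjoint V) ^ m) x) atTop (nhds 0)

/-- `g ∈ θ · H²(𝔻^n)`, i.e. `g = θ h` a.e. for some `h ∈ H²(𝔻^n)`. -/
def InMulRange {n : ℕ} (θ : Torus n → ℂ) (g : HardyH n) : Prop :=
  ∃ h : HardyH n, repFn g =ᵐ[(volume : Measure (Torus n))] fun z => θ z * repFn h z

/-- `P` is the orthogonal projection of `H²(𝔻^n)` onto `θ H²(𝔻^n)`. -/
def IsOrthProjOntoMul {n : ℕ} (P : HardyH n →L[ℂ] HardyH n) (θ : Torus n → ℂ) : Prop :=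
  IsIdempotentElem P ∧ IsSelfAdjoint P ∧
    ∀ g : HardyH n, g ∈ LinearMap.range (P : HardyH n →ₗ[ℂ] HardyH n) ↔ InMulRange θ g
/-!
A partial isometry `T` is a contraction, and for a contraction `A`, `‖A y‖ = ‖y‖` forces
`A* A y = y`; applied to `T` on `(ker T)ᗮ` and to `T*`, this gives `y ∈ ran T ↔ ‖T* y‖ = ‖y‖`.
A Toeplitz operator satisfies `S* T S = T` for the isometry `S = M_{z_i}`
(because `⟨φ z_i f, z_i g⟩ = ⟨φ f, g⟩`), hence `T* = S* T* S`. So for `g ∈ ran T`,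
`‖S g‖ = ‖g‖ = ‖T* g‖ = ‖S* T* S g‖ ≤ ‖T* S g‖ ≤ ‖S g‖`, which puts `S g` in `ran T`.
-/

open scoped InnerProductSpace

section PartialIsometry

variable {E F : Type*} [NormedAddCommGroup E] [InnerProductSpace ℂ E] [CompleteSpace E]
  [NormedAddCommGroup F] [InnerProductSpace ℂ F]

theorem exists_mem_orthogonal_ker_apply_eq (T : E →L[ℂ] F) (x : E) :
    ∃ x' ∈ (LinearMap.ker (T : E →ₗ[ℂ] F))ᗮ, T x' = T x ∧ ‖x'‖ ≤ ‖x‖ := by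
  set K := LinearMap.ker (T : E →ₗ[ℂ] F)
  have : CompleteSpace K := T.isClosed_ker.completeSpace_coe
  refine ⟨Kᗮ.starProjection x, Kᗮ.starProjection_apply_mem x, ?_,
    Kᗮ.norm_starProjection_apply_le x⟩
  have hK : T (K.starProjection x) = 0 := K.starProjection_apply_mem x
  rw [Submodule.starProjection_orthogonal_val, map_sub, hK, sub_zero]

theorem IsPartialIsometryOp.opNorm_le_one {T : E →L[ℂ] F} (hT : IsPartialIsometryOp T) :
    ‖T‖ ≤ 1 := by
  refine T.opNorm_le_bound zero_le_one fun x => ?_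
  obtain ⟨x', hx', hTx', hx'x⟩ := exists_mem_orthogonal_ker_apply_eq T x
  rw [one_mul, ← hTx', hT x' hx']
  exact hx'x

variable [CompleteSpace F]

theorem norm_adjoint_apply_le_of_opNorm_le_one {A : E →L[ℂ] F} (hA : ‖A‖ ≤ 1) (y : F) :
    ‖adjoint A y‖ ≤ ‖y‖ :=
  ((adjoint A).le_of_opNorm_le (by rwa [LinearIsometryEquiv.norm_map]) y).trans_eq (one_mul _)

theorem adjoint_apply_apply_eq_self_of_norm_apply_eq {A : E →L[ℂ] F} (hA : ‖A‖ ≤ 1) {y : E}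
    (hy : ‖A y‖ = ‖y‖) : adjoint A (A y) = y := by
  have h_le : ‖adjoint A (A y)‖ ≤ ‖A y‖ := norm_adjoint_apply_le_of_opNorm_le_one hA _
  have h_re : RCLike.re ⟪adjoint A (A y), y⟫_ℂ = ‖A y‖ ^ 2 := by
    rw [adjoint_inner_left, inner_self_eq_norm_sq]
  have h_sq : ‖adjoint A (A y) - y‖ ^ 2 = 0 := by
    refine le_antisymm ?_ (sq_nonneg _)
    rw [norm_sub_sq (𝕜 := ℂ), h_re]
    nlinarith [norm_nonneg (adjoint A (A y))]
  rw [← sub_eq_zero, ← norm_eq_zero]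
  exact pow_eq_zero_iff two_ne_zero |>.mp h_sq

namespace IsPartialIsometryOp

theorem mem_range_iff_norm_adjoint_apply {T : E →L[ℂ] F} (hT : IsPartialIsometryOp T) {y : F} :
    y ∈ LinearMap.range (T : E →ₗ[ℂ] F) ↔ ‖adjoint T y‖ = ‖y‖ := by
  constructor
  · rintro ⟨x, rfl⟩
    obtain ⟨x', hx', hTx', -⟩ := exists_mem_orthogonal_ker_apply_eq T x
    have h_iso : ‖T x'‖ = ‖x'‖ := hT x' hx'
    change ‖adjoint T (T x)‖ = ‖T x‖
    rw [← hTx', adjoint_apply_apply_eq_self_of_norm_apply_eq hT.opNorm_le_one h_iso, h_iso]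
  · intro hy
    have h_adj : ‖adjoint T‖ ≤ 1 := by rw [LinearIsometryEquiv.norm_map]; exact hT.opNorm_le_one
    have h_fix := adjoint_apply_apply_eq_self_of_norm_apply_eq h_adj hy
    rw [adjoint_adjoint] at h_fix
    exact ⟨adjoint T y, h_fix⟩

theorem apply_mem_range_of_adjoint_comp_comp_eq {T S : E →L[ℂ] E}
    (hT : IsPartialIsometryOp T) (hS : ∀ x, ‖S x‖ = ‖x‖) (hST : adjoint S ∘L T ∘L S = T) {g : E}
    (hg : g ∈ LinearMap.range (T : E →ₗ[ℂ] E)) : S g ∈ LinearMap.range (T : E →ₗ[ℂ] E) := by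
  have hS_le : ‖S‖ ≤ 1 := S.opNorm_le_bound zero_le_one fun x => (hS x).trans_le (one_mul _).ge
  have h_adj : adjoint T = adjoint S ∘L adjoint T ∘L S := by
    conv_lhs => rw [← hST]
    rw [adjoint_comp, adjoint_comp, adjoint_adjoint, comp_assoc]
  rw [hT.mem_range_iff_norm_adjoint_apply] at hg ⊢
  refine le_antisymm (norm_adjoint_apply_le_of_opNorm_le_one hT.opNorm_le_one _) ?_
  calc ‖S g‖ = ‖adjoint T g‖ := by rw [hS, hg]
    _ = ‖adjoint S (adjoint T (S g))‖ := congrArg norm (DFunLike.congr_fun h_adj g)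
    _ ≤ ‖adjoint T (S g)‖ := norm_adjoint_apply_le_of_opNorm_le_one hS_le _

end IsPartialIsometryOp

end PartialIsometry

section Multiplication

variable {n : ℕ}

theorem coeFn_mulL2 (φ : Torus n → ℂ) (hφ : MemLp φ ⊤ (volume : Measure (Torus n))) (f : L2T n) :
    ⇑(mulL2 φ hφ f) =ᵐ[volume] fun z => φ z * f z :=
  MemLp.coeFn_toLp _

theorem mulL2_add (φ : Torus n → ℂ) (hφ : MemLp φ ⊤ (volume : Measure (Torus n))) (f g : L2T n) :
    mulL2 φ hφ (f + g) = mulL2 φ hφ f + mulL2 φ hφ g := by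
  refine Lp.ext ?_
  filter_upwards [coeFn_mulL2 φ hφ (f + g), coeFn_mulL2 φ hφ f, coeFn_mulL2 φ hφ g,
    Lp.coeFn_add f g, Lp.coeFn_add (mulL2 φ hφ f) (mulL2 φ hφ g)] with z h h₁ h₂ h₃ h₄
  simp only [h, h₁, h₂, h₃, h₄, Pi.add_apply, mul_add]

theorem mulL2_smul (φ : Torus n → ℂ) (hφ : MemLp φ ⊤ (volume : Measure (Torus n))) (c : ℂ)
    (f : L2T n) : mulL2 φ hφ (c • f) = c • mulL2 φ hφ f := by
  refine Lp.ext ?_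
  filter_upwards [coeFn_mulL2 φ hφ (c • f), coeFn_mulL2 φ hφ f,
    Lp.coeFn_smul c f, Lp.coeFn_smul c (mulL2 φ hφ f)] with z h h₁ h₂ h₃
  simp only [h, h₁, h₂, h₃, Pi.smul_apply, smul_eq_mul]
  ring

theorem mulL2_comm (φ ψ : Torus n → ℂ) (hφ : MemLp φ ⊤ (volume : Measure (Torus n)))
    (hψ : MemLp ψ ⊤ (volume : Measure (Torus n))) (f : L2T n) :
    mulL2 φ hφ (mulL2 ψ hψ f) = mulL2 ψ hψ (mulL2 φ hφ f) := by
  refine Lp.ext ?_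
  filter_upwards [coeFn_mulL2 φ hφ (mulL2 ψ hψ f), coeFn_mulL2 ψ hψ f,
    coeFn_mulL2 ψ hψ (mulL2 φ hφ f), coeFn_mulL2 φ hφ f] with z h₁ h₂ h₃ h₄
  rw [h₁, h₂, h₃, h₄, mul_left_comm]

def mulL2LinearMap (φ : Torus n → ℂ) (hφ : MemLp φ ⊤ (volume : Measure (Torus n))) :
    L2T n →ₗ[ℂ] L2T n where
  toFun := mulL2 φ hφ
  map_add' := mulL2_add φ hφ
  map_smul' := mulL2_smul φ hφ

theorem norm_mulL2_of_norm_eq_one {u : Torus n → ℂ} (hu : MemLp u ⊤ (volume : Measure (Torus n)))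
    (hu_one : ∀ᵐ z ∂(volume : Measure (Torus n)), ‖u z‖ = 1) (f : L2T n) :
    ‖mulL2 u hu f‖ = ‖f‖ := by
  rw [Lp.norm_def, Lp.norm_def]
  congr 1
  refine eLpNorm_congr_norm_ae ?_
  filter_upwards [coeFn_mulL2 u hu f, hu_one] with z h h_one
  rw [h, norm_mul, h_one, one_mul]

def mulL2LinearIsometry {u : Torus n → ℂ} (hu : MemLp u ⊤ (volume : Measure (Torus n)))
    (hu_one : ∀ᵐ z ∂(volume : Measure (Torus n)), ‖u z‖ = 1) : L2T n →ₗᵢ[ℂ] L2T n where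
  toLinearMap := mulL2LinearMap u hu
  norm_map' := norm_mulL2_of_norm_eq_one hu hu_one

theorem charFn_mul (k m : Fin n → ℤ) (z : Torus n) :
    charFn n k z * charFn n m z = charFn n (k + m) z := by
  simp only [charFn, ← Finset.prod_mul_distrib, Pi.add_apply, fourier_add]

theorem conj_charFn (k : Fin n → ℤ) (z : Torus n) :
    (starRingEnd ℂ) (charFn n k z) = charFn n (-k) z := by
  simp only [charFn, map_prod, Pi.neg_apply, fourier_neg]

theorem mFourierCoeff_mulL2_charFn (m : Fin n → ℤ) (f : L2T n) (k : Fin n → ℤ) :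
    mFourierCoeff (⇑(mulL2 (charFn n m) (charFn_memℒp n m) f)) k
      = mFourierCoeff (⇑f) (k - m) := by
  rw [mFourierCoeff_congr (coeFn_mulL2 _ _ f) k, mFourierCoeff, mFourierCoeff]
  congr 1
  funext z
  rw [← mul_assoc, conj_charFn, charFn_mul, conj_charFn, neg_sub, neg_add_eq_sub]

theorem mulL2_charFn_mem_hardySpace {m : Fin n → ℤ} (hm : 0 ≤ m) {f : L2T n}
    (hf : f ∈ hardySpace n) : mulL2 (charFn n m) (charFn_memℒp n m) f ∈ hardySpace n := by
  rintro k ⟨j, hj⟩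
  rw [mFourierCoeff_mulL2_charFn]
  exact hf (k - m) ⟨j, by simpa using hj.trans_le (hm j)⟩

def hardyMulCharFn (n : ℕ) {m : Fin n → ℤ} (hm : 0 ≤ m) : HardyH n →ₗᵢ[ℂ] HardyH n where
  toLinearMap := (mulL2LinearMap (charFn n m) (charFn_memℒp n m)).restrict
    fun _ => mulL2_charFn_mem_hardySpace hm
  norm_map' f :=
    norm_mulL2_of_norm_eq_one (charFn_memℒp n m) (Eventually.of_forall (charFn_norm n m)) f

theorem IsToeplitz.adjoint_comp_comp_hardyMulCharFn {φ : Torus n → ℂ}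
    {hφ : MemLp φ ⊤ (volume : Measure (Torus n))} {T : HardyH n →L[ℂ] HardyH n}
    (hT : IsToeplitz φ hφ T) {m : Fin n → ℤ} (hm : 0 ≤ m) :
    adjoint (hardyMulCharFn n hm).toContinuousLinearMap ∘L T ∘L
      (hardyMulCharFn n hm).toContinuousLinearMap = T := by
  set U := mulL2LinearIsometry (charFn_memℒp n m) (Eventually.of_forall (charFn_norm n m))
  refine ContinuousLinearMap.ext fun x => ext_inner_left ℂ fun y => ?_
  rw [comp_apply, comp_apply, adjoint_inner_right, hT, hT,
    Submodule.inner_orthogonalProjectionOnto_eq_of_mem_left,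
    Submodule.inner_orthogonalProjectionOnto_eq_of_mem_left]
  change ⟪U y, mulL2 φ hφ (U x)⟫_ℂ = _
  have h_comm : mulL2 φ hφ (U x) = U (mulL2 φ hφ x) :=
    mulL2_comm φ (charFn n m) hφ (charFn_memℒp n m) x
  rw [h_comm, U.inner_map_map]

end Multiplication

theorem stmt7_general (n : ℕ) (φ : Torus n → ℂ)
    (hφ : MemLp φ ⊤ (volume : Measure (Torus n)))
    (T : HardyH n →L[ℂ] HardyH n) (hT : IsToeplitz φ hφ T)
    (hPI : IsPartialIsometryOp T) :
    ∀ g : HardyH n, g ∈ LinearMap.range (T : HardyH n →ₗ[ℂ] HardyH n) → ∀ i : Fin n,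
      ∃ h : HardyH n, h ∈ LinearMap.range (T : HardyH n →ₗ[ℂ] HardyH n) ∧
        (h : L2T n) = mulL2 (charFn n (Pi.single i 1)) (charFn_memℒp n (Pi.single i 1))
          (g : L2T n) := by
  intro g hg i
  have hi : (0 : Fin n → ℤ) ≤ Pi.single i 1 := Pi.single_nonneg.mpr zero_le_one
  have hS : ∀ x, ‖(hardyMulCharFn n hi).toContinuousLinearMap x‖ = ‖x‖ :=
    (hardyMulCharFn n hi).norm_map
  refine ⟨(hardyMulCharFn n hi).toContinuousLinearMap g, ?_, rfl⟩
  exact hPI.apply_mem_range_of_adjoint_comp_comp_eq hS (hT.adjoint_comp_comp_hardyMulCharFn hi) hg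

/-- Lemma 3.1. If `T_φ` is a partial isometry, then its (closed) range is
invariant under multiplication by each coordinate function `z_i`. -/
theorem stmt7 (n : ℕ) (hn : 1 ≤ n) (φ : Torus n → ℂ)
    (hφ : MemLp φ ⊤ (volume : Measure (Torus n)))
    (hφ0 : ¬ φ =ᵐ[(volume : Measure (Torus n))] (0 : Torus n → ℂ))
    (T : HardyH n →L[ℂ] HardyH n) (hT : IsToeplitz φ hφ T)
    (hPI : IsPartialIsometryOp T) :
    ∀ g : HardyH n, g ∈ LinearMap.range (T : HardyH n →ₗ[ℂ] HardyH n) → ∀ i : Fin n,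
      ∃ h : HardyH n, h ∈ LinearMap.range (T : HardyH n →ₗ[ℂ] HardyH n) ∧
        (h : L2T n) = mulL2 (charFn n (Pi.single i 1)) (charFn_memℒp n (Pi.single i 1))
          (g : L2T n) :=
  stmt7_general n φ hφ T hT hPI

end
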